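/- Let N_1, ..., N_K be n×n real symmetric matrices with N_1 positive definite and N_k − N_{k−1} positive semidefinite for k = 2, ..., K, and let Q̃_1, ..., Q̃_K and Q̂_1, ..., Q̂_K be n×n real positive semidefinite matrices. Then for every n with 1 ≤ n ≤ K, the quantity T_n = Tr[ ∑_{k=1}^{n} (Q̂_k − Q̃_k) ( (N_k + ∑_{i=1}^{k} Q̃_i)^{−1} − (N_k + ∑_{i=1}^{k} Q̂_i)^{−1} ) ] satisfies T_n ≥ 0. -/

import Mathlib

/-!
Write `Sₖ = Nₖ + ∑_{i ≤ k} Q̃ᵢ`, `Tₖ = Nₖ + ∑_{i ≤ k} Q̂ᵢ` and `Δₖ = Tₖ - Sₖ`, so that `Δ₀ = 0`,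
the `k`-th term is `tr((Δₖ - Δₖ₋₁)(Sₖ⁻¹ - Tₖ⁻¹))` and `Sₖ⁻¹ - Tₖ⁻¹ = Sₖ⁻¹ Δₖ Tₖ⁻¹`.
For `P, Q ⪰ 0` the bilinear form `(X, Y) ↦ tr(X P Y Q)` is symmetric and positive semidefinite
on symmetric matrices, so `2 tr(X P Y Q) ≤ tr(X P X Q) + tr(Y P Y Q)`. Combined with the
antitonicity of inversion (`Sₖ⁻¹ ⪯ Sₖ₋₁⁻¹`, `Tₖ⁻¹ ⪯ Tₖ₋₁⁻¹`), this makes each term at least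
`(Φₖ - Φₖ₋₁) / 2` for the potential `Φₖ = tr(Δₖ Sₖ⁻¹ Δₖ Tₖ⁻¹) ≥ 0`, and the sum telescopes.
-/

open Finset Matrix
open scoped MatrixOrder ComplexOrder

lemma monotoneOn_sum_Icc_one {M : Type*} [AddCommMonoid M] [PartialOrder M]
    [IsOrderedAddMonoid M] {f : ℕ → M} {K : ℕ} (hf : ∀ k ∈ Icc 1 K, 0 ≤ f k) :
    MonotoneOn (fun k ↦ ∑ i ∈ Icc 1 k, f i) (Set.Iic K) := by
  intro a _ b hb hab
  refine sum_le_sum_of_subset_of_nonneg (Icc_subset_Icc_right hab) fun i hi _ ↦ hf i ?_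
  exact Icc_subset_Icc_right hb hi

namespace Matrix

variable {ι 𝕜 : Type*} [RCLike 𝕜]

lemma PosDef.of_le {A B : Matrix ι ι 𝕜} (hA : A.PosDef) (hAB : A ≤ B) : B.PosDef := by
  simpa using hA.add_posSemidef hAB

lemma PosDef.of_monotoneOn {S : ℕ → Matrix ι ι 𝕜} {m k : ℕ} (hS : (S 1).PosDef)
    (hSm : MonotoneOn S (Set.Icc 1 m)) (hk : k ∈ Set.Icc 1 m) : (S k).PosDef :=
  hS.of_le (hSm ⟨le_rfl, hk.1.trans hk.2⟩ hk hk.1)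

variable [Fintype ι]

lemma PosSemidef.trace_mul_nonneg {A B : Matrix ι ι 𝕜} (hA : A.PosSemidef) (hB : B.PosSemidef) :
    0 ≤ (A * B).trace := by
  classical
  obtain ⟨C, rfl⟩ := CStarAlgebra.nonneg_iff_eq_star_mul_self.mp hA.nonneg
  rw [star_eq_conjTranspose, Matrix.mul_assoc, trace_mul_comm]
  exact (hB.mul_mul_conjTranspose_same C).trace_nonneg

lemma PosSemidef.trace_mul_le_trace_mul {A B C : Matrix ι ι 𝕜} (hA : A.PosSemidef) (hBC : B ≤ C) :
    (A * B).trace ≤ (A * C).trace := by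
  rw [← sub_nonneg, ← trace_sub, ← Matrix.mul_sub]
  exact hA.trace_mul_nonneg hBC

/-- Both Schur complements of `!![B, 1; 1, A⁻¹]`, `A⁻¹ - B⁻¹` and `B - A`, are positive
semidefinite exactly when the block matrix is. -/
lemma PosDef.inv_le_inv [DecidableEq ι] {A B : Matrix ι ι 𝕜} (hA : A.PosDef) (hAB : A ≤ B) :
    B⁻¹ ≤ A⁻¹ := by
  have hB := hA.of_le hAB
  have := hB.isUnit.invertible
  have := hA.isUnit.invertible
  have hB₁₁ := PosDef.fromBlocks₁₁ (1 : Matrix ι ι 𝕜) A⁻¹ hB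
  have hA₂₂ := PosDef.fromBlocks₂₂ B (1 : Matrix ι ι 𝕜) hA.inv
  simp only [conjTranspose_one, Matrix.mul_one, Matrix.one_mul, inv_inv_of_invertible]
    at hB₁₁ hA₂₂
  exact hB₁₁.mp (hA₂₂.mpr hAB)

lemma trace_mul_mul_mul_self_nonneg {X P Q : Matrix ι ι 𝕜} (hX : X.IsHermitian)
    (hP : P.PosSemidef) (hQ : Q.PosSemidef) : 0 ≤ (X * P * X * Q).trace := by
  simpa only [hX.eq] using (hP.conjTranspose_mul_mul_same X).trace_mul_nonneg hQ

lemma trace_mul_mul_mul_self_le_of_le {X P P' Q Q' : Matrix ι ι 𝕜} (hX : X.IsHermitian)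
    (hP : P.PosSemidef) (hQ' : Q'.PosSemidef) (hPP' : P ≤ P') (hQQ' : Q ≤ Q') :
    (X * P * X * Q).trace ≤ (X * P' * X * Q').trace := by
  have hXPX : (X * P * X).PosSemidef := by simpa only [hX.eq] using hP.conjTranspose_mul_mul_same X
  have hXQX : (X * Q' * X).PosSemidef := by
    simpa only [hX.eq] using hQ'.conjTranspose_mul_mul_same X
  calc (X * P * X * Q).trace ≤ (X * P * X * Q').trace := hXPX.trace_mul_le_trace_mul hQQ'
    _ = (X * Q' * X * P).trace := by
      rw [Matrix.mul_assoc (X * P), trace_mul_comm, ← Matrix.mul_assoc]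
    _ ≤ (X * Q' * X * P').trace := hXQX.trace_mul_le_trace_mul hPP'
    _ = (X * P' * X * Q').trace := by
      rw [Matrix.mul_assoc (X * Q'), trace_mul_comm, ← Matrix.mul_assoc]

lemma trace_mul_mul_mul_comm_of_isHermitian {R : Type*} [CommRing R] [StarRing R] [TrivialStar R]
    {X Y P Q : Matrix ι ι R} (hX : X.IsHermitian) (hY : Y.IsHermitian) (hP : P.IsHermitian)
    (hQ : Q.IsHermitian) : (X * P * Y * Q).trace = (Y * P * X * Q).trace := by
  calc (X * P * Y * Q).trace = (X * P * Y * Q)ᴴ.trace := by rw [trace_conjTranspose, star_trivial]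
    _ = (Q * (Y * P * X)).trace := by
      simp only [conjTranspose_mul, hX.eq, hY.eq, hP.eq, hQ.eq, Matrix.mul_assoc]
    _ = (Y * P * X * Q).trace := trace_mul_comm _ _

lemma two_mul_trace_mul_mul_mul_le {X Y P Q : Matrix ι ι ℝ} (hX : X.IsHermitian)
    (hY : Y.IsHermitian) (hP : P.PosSemidef) (hQ : Q.PosSemidef) :
    2 * (X * P * Y * Q).trace ≤ (X * P * X * Q).trace + (Y * P * Y * Q).trace := by
  have hsq := trace_mul_mul_mul_self_nonneg (hX.sub hY) hP hQ
  have hcomm := trace_mul_mul_mul_comm_of_isHermitian hX hY hP.isHermitian hQ.isHermitian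
  simp only [Matrix.sub_mul, Matrix.mul_sub, trace_sub] at hsq
  linarith

variable [DecidableEq ι]

lemma trace_mul_inv_sub_inv {S T : Matrix ι ι 𝕜} (hS : S.PosDef) (hT : T.PosDef)
    (X : Matrix ι ι 𝕜) : (X * (S⁻¹ - T⁻¹)).trace = (X * S⁻¹ * (T - S) * T⁻¹).trace := by
  rw [inv_sub_inv (by simp [hS.isUnit, hT.isUnit])]
  simp only [Matrix.mul_assoc]

lemma two_mul_trace_sub_mul_inv_sub_inv_le {S T S' T' : Matrix ι ι ℝ} (hS : S.PosDef)
    (hT : T.PosDef) (hSS' : S ≤ S') (hTT' : T ≤ T') :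
    2 * ((T - S) * (S'⁻¹ - T'⁻¹)).trace ≤
      ((T - S) * S⁻¹ * (T - S) * T⁻¹).trace + ((T' - S') * S'⁻¹ * (T' - S') * T'⁻¹).trace := by
  have hS' := hS.of_le hSS'
  have hT' := hT.of_le hTT'
  have hΔ : (T - S).IsHermitian := hT.isHermitian.sub hS.isHermitian
  rw [trace_mul_inv_sub_inv hS' hT']
  have hmono := trace_mul_mul_mul_self_le_of_le hΔ hS'.inv.posSemidef hT.inv.posSemidef
    (hS.inv_le_inv hSS') (hT.inv_le_inv hTT')
  have hamgm := two_mul_trace_mul_mul_mul_le hΔ (hT'.isHermitian.sub hS'.isHermitian)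
    hS'.inv.posSemidef hT'.inv.posSemidef
  linarith

theorem trace_sub_mul_inv_mul_sub_mul_inv_le_two_mul_trace_sum {S T D : ℕ → Matrix ι ι ℝ}
    {m : ℕ} (hm : 1 ≤ m) (hS : (S 1).PosDef) (hT : (T 1).PosDef)
    (hSm : MonotoneOn S (Set.Icc 1 m)) (hTm : MonotoneOn T (Set.Icc 1 m))
    (hD : ∀ k, T k - S k = ∑ i ∈ Icc 1 k, D i) :
    ((T m - S m) * (S m)⁻¹ * (T m - S m) * (T m)⁻¹).trace ≤
      2 * (∑ k ∈ Icc 1 m, D k * ((S k)⁻¹ - (T k)⁻¹)).trace := by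
  induction m, hm using Nat.le_induction with
  | base =>
    have hD₁ : D 1 = T 1 - S 1 := by simp [hD 1]
    rw [Icc_self, sum_singleton, hD₁, trace_mul_inv_sub_inv hS hT]
    linarith [trace_mul_mul_mul_self_nonneg (hT.isHermitian.sub hS.isHermitian)
      hS.inv.posSemidef hT.inv.posSemidef]
  | succ m hm ih =>
    have hmm : m ∈ Set.Icc 1 (m + 1) := ⟨hm, by omega⟩
    have hmm' : m + 1 ∈ Set.Icc 1 (m + 1) := ⟨by omega, le_rfl⟩
    have hSsucc := hS.of_monotoneOn hSm hmm'
    have hTsucc := hT.of_monotoneOn hTm hmm'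
    have hDsucc : D (m + 1) = (T (m + 1) - S (m + 1)) - (T m - S m) := by
      rw [hD, hD, sum_Icc_succ_top (by omega)]
      abel
    have hstep := two_mul_trace_sub_mul_inv_sub_inv_le (hS.of_monotoneOn hSm hmm)
      (hT.of_monotoneOn hTm hmm) (hSm hmm hmm' (by omega)) (hTm hmm hmm' (by omega))
    have hsub : Set.Icc 1 m ⊆ Set.Icc 1 (m + 1) := Set.Icc_subset_Icc_right (by omega)
    have ih' := ih (hSm.mono hsub) (hTm.mono hsub)
    rw [sum_Icc_succ_top (by omega), trace_add, hDsucc, Matrix.sub_mul _ (T m - S m), trace_sub,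
      trace_mul_inv_sub_inv hSsucc hTsucc]
    linarith

theorem trace_sum_mul_inv_sub_inv_nonneg {S T D : ℕ → Matrix ι ι ℝ} {m : ℕ} (hm : 1 ≤ m)
    (hS : (S 1).PosDef) (hT : (T 1).PosDef)
    (hSm : MonotoneOn S (Set.Icc 1 m)) (hTm : MonotoneOn T (Set.Icc 1 m))
    (hD : ∀ k, T k - S k = ∑ i ∈ Icc 1 k, D i) :
    0 ≤ (∑ k ∈ Icc 1 m, D k * ((S k)⁻¹ - (T k)⁻¹)).trace := by
  have hSpos := hS.of_monotoneOn hSm ⟨hm, le_rfl⟩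
  have hTpos := hT.of_monotoneOn hTm ⟨hm, le_rfl⟩
  linarith [trace_sub_mul_inv_mul_sub_mul_inv_le_two_mul_trace_sum hm hS hT hSm hTm hD,
    trace_mul_mul_mul_self_nonneg (hTpos.isHermitian.sub hSpos.isHermitian)
      hSpos.inv.posSemidef hTpos.inv.posSemidef]

end Matrix

theorem adbc_partial_term_nonneg_general (n K : ℕ)
    (N Qt Qh : ℕ → Matrix (Fin n) (Fin n) ℝ)
    (hN1 : (N 1).PosDef)
    (hdeg : ∀ k ∈ Finset.Icc 2 K, (N k - N (k - 1)).PosSemidef)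
    (hQt : ∀ k ∈ Finset.Icc 1 K, (Qt k).PosSemidef)
    (hQh : ∀ k ∈ Finset.Icc 1 K, (Qh k).PosSemidef) :
    ∀ m ∈ Finset.Icc 1 K,
      0 ≤ Matrix.trace (∑ k ∈ Finset.Icc 1 m,
        (Qh k - Qt k) *
          ((N k + ∑ i ∈ Finset.Icc 1 k, Qt i)⁻¹ -
           (N k + ∑ i ∈ Finset.Icc 1 k, Qh i)⁻¹)) := by
  intro m hm
  rw [Finset.mem_Icc] at hm
  have hN : MonotoneOn N (Set.Icc 1 K) :=
    monotoneOn_of_le_add_one Set.ordConnected_Icc fun k _ hk hk' ↦ by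
      simpa [Matrix.le_iff] using hdeg (k + 1) (mem_Icc.mpr ⟨Nat.succ_le_succ hk.1, hk'.2⟩)
  have hmono (Q : ℕ → Matrix (Fin n) (Fin n) ℝ) (hQ : ∀ k ∈ Icc 1 K, (Q k).PosSemidef) :
      MonotoneOn (fun k ↦ N k + ∑ i ∈ Icc 1 k, Q i) (Set.Icc 1 m) :=
    (hN.add ((monotoneOn_sum_Icc_one fun k hk ↦ (hQ k hk).nonneg).mono
      Set.Icc_subset_Iic_self)).mono (Set.Icc_subset_Icc_right hm.2)
  have hpos (Q : ℕ → Matrix (Fin n) (Fin n) ℝ) (hQ : ∀ k ∈ Icc 1 K, (Q k).PosSemidef) :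
      (N 1 + ∑ i ∈ Icc 1 1, Q i).PosDef := by
    simpa using hN1.add_posSemidef (hQ 1 (mem_Icc.mpr ⟨le_rfl, hm.1.trans hm.2⟩))
  exact trace_sum_mul_inv_sub_inv_nonneg hm.1 (hpos Qt hQt) (hpos Qh hQh) (hmono Qt hQt)
    (hmono Qh hQh) fun k ↦ by simp only [sum_sub_distrib]; abel

/-- Each partial DSC term of the ADBC game is nonnegative:
`T_m = Tr[∑_{k=1}^{m} (Q̂ₖ − Q̃ₖ)((Nₖ + ∑_{i≤k} Q̃ᵢ)⁻¹ − (Nₖ + ∑_{i≤k} Q̂ᵢ)⁻¹)] ≥ 0`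
for every `1 ≤ m ≤ K`. -/
theorem adbc_partial_term_nonneg (n K : ℕ)
    (N Qt Qh : ℕ → Matrix (Fin n) (Fin n) ℝ)
    (hNsymm : ∀ k ∈ Finset.Icc 1 K, (N k).IsSymm)
    (hN1 : (N 1).PosDef)
    (hdeg : ∀ k ∈ Finset.Icc 2 K, (N k - N (k - 1)).PosSemidef)
    (hQt : ∀ k ∈ Finset.Icc 1 K, (Qt k).PosSemidef)
    (hQh : ∀ k ∈ Finset.Icc 1 K, (Qh k).PosSemidef) :
    ∀ m ∈ Finset.Icc 1 K,
      0 ≤ Matrix.trace (∑ k ∈ Finset.Icc 1 m,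
        (Qh k - Qt k) *
          ((N k + ∑ i ∈ Finset.Icc 1 k, Qt i)⁻¹ -
           (N k + ∑ i ∈ Finset.Icc 1 k, Qh i)⁻¹)) :=
  adbc_partial_term_nonneg_general n K N Qt Qh hN1 hdeg hQt hQh
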